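/- The linearization of the system at the fixed point P = (λ/√6, 0) (where 0 ≤ λ² < 6) has eigenvalues -(6-λ²)/2 and -(3γ-λ²). In particular P is a stable node when λ² < 3γ and a saddle when 3γ < λ² < 6. -/

import Mathlib

/-- The `Σ`-component of the vector field. -/
noncomputable def fS (lam gam s w : ℝ) : ℝ :=
  -(2 - (-1 + 3 * s ^ 2 + 3 / 2 * gam * w)) * s + Real.sqrt (3 / 2) * lam * (1 - s ^ 2 - w)

/-- The `Ω`-component of the vector field. -/
noncomputable def fO (gam s w : ℝ) : ℝ :=
  (2 * (1 + (-1 + 3 * s ^ 2 + 3 / 2 * gam * w)) - 3 * gam) * w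

/-- The Jacobian matrix of the vector field at `(s,w)`. -/
noncomputable def Jac (lam gam s w : ℝ) : Matrix (Fin 2) (Fin 2) ℝ :=
  !![deriv (fun x => fS lam gam x w) s, deriv (fun y => fS lam gam s y) w;
     deriv (fun x => fO gam x w) s, deriv (fun y => fO gam s y) w]

/-! The Jacobian at `P` is upper triangular, because `∂Ω'/∂Σ = 12 Σ Ω` vanishes on `Ω = 0`;
its eigenvalues are therefore the diagonal entries `∂Σ'/∂Σ` and `∂Ω'/∂Ω`, which at `Σ² = λ²/6`
evaluate to `-(6 - λ²)/2` and `λ² - 3γ`. -/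

theorem hasDerivAt_fS_fst (lam gam s w : ℝ) :
    HasDerivAt (fun x => fS lam gam x w)
      (-3 + 9 * s ^ 2 + 3 / 2 * gam * w - 2 * Real.sqrt (3 / 2) * lam * s) s := by
  have hsq : HasDerivAt (fun x : ℝ => x ^ 2) (2 * s) s := by simpa using hasDerivAt_pow 2 s
  refine (((((hsq.const_mul 3).const_add (-1)).add_const (3 / 2 * gam * w)).const_sub 2).neg.mul
      (hasDerivAt_id' s) |>.add (((hsq.const_sub 1).sub_const w).const_mul (Real.sqrt (3 / 2) * lam))
    ).congr_deriv ?_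
  simp only [Pi.neg_apply]
  ring

theorem hasDerivAt_fS_snd (lam gam s w : ℝ) :
    HasDerivAt (fun y => fS lam gam s y) (3 / 2 * gam * s - Real.sqrt (3 / 2) * lam) w := by
  refine (((((hasDerivAt_id' w).const_mul (3 / 2 * gam)).const_add (-1 + 3 * s ^ 2)).const_sub 2).neg
      |>.mul_const s |>.add (((hasDerivAt_id' w).const_sub (1 - s ^ 2)).const_mul
        (Real.sqrt (3 / 2) * lam))).congr_deriv ?_
  ring

theorem hasDerivAt_fO_fst (gam s w : ℝ) :
    HasDerivAt (fun x => fO gam x w) (12 * s * w) s := by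
  have hsq : HasDerivAt (fun x : ℝ => x ^ 2) (2 * s) s := by simpa using hasDerivAt_pow 2 s
  refine ((((((hsq.const_mul 3).const_add (-1)).add_const (3 / 2 * gam * w)).const_add 1).const_mul 2
      |>.sub_const (3 * gam)).mul_const w).congr_deriv ?_
  ring

theorem hasDerivAt_fO_snd (gam s w : ℝ) :
    HasDerivAt (fun y => fO gam s y) (6 * s ^ 2 + 6 * gam * w - 3 * gam) w := by
  refine ((((((hasDerivAt_id' w).const_mul (3 / 2 * gam)).const_add (-1 + 3 * s ^ 2)).const_add 1)
      |>.const_mul 2 |>.sub_const (3 * gam)).mul (hasDerivAt_id' w)).congr_deriv ?_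
  ring

theorem Jac_eq (lam gam s w : ℝ) :
    Jac lam gam s w =
      !![-3 + 9 * s ^ 2 + 3 / 2 * gam * w - 2 * Real.sqrt (3 / 2) * lam * s,
          3 / 2 * gam * s - Real.sqrt (3 / 2) * lam;
         12 * s * w, 6 * s ^ 2 + 6 * gam * w - 3 * gam] := by
  rw [Jac, (hasDerivAt_fS_fst lam gam s w).deriv, (hasDerivAt_fS_snd lam gam s w).deriv,
    (hasDerivAt_fO_fst gam s w).deriv, (hasDerivAt_fO_snd gam s w).deriv]

theorem Matrix.det_sub_smul_one_eq_zero_iff_of_upperTriangular {R : Type*} [CommRing R]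
    [NoZeroDivisors R] (A : Matrix (Fin 2) (Fin 2) R) (hA : A 1 0 = 0) (μ : R) :
    (A - μ • 1).det = 0 ↔ μ = A 0 0 ∨ μ = A 1 1 := by
  simp [Matrix.det_fin_two, hA, sub_eq_zero, @eq_comm _ μ]

theorem sq_div_sqrt_six (lam : ℝ) : (lam / Real.sqrt 6) ^ 2 = lam ^ 2 / 6 := by
  rw [div_pow, Real.sq_sqrt (by norm_num)]

theorem sqrt_three_halves_mul_mul_div_sqrt_six (lam : ℝ) :
    Real.sqrt (3 / 2) * lam * (lam / Real.sqrt 6) = lam ^ 2 / 2 := by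
  have h6 : Real.sqrt 6 = Real.sqrt (3 / 2) * 2 := by
    rw [show (6 : ℝ) = 3 / 2 * 2 ^ 2 by norm_num, Real.sqrt_mul (by norm_num),
      Real.sqrt_sq zero_le_two]
  have h32 : Real.sqrt (3 / 2) ≠ 0 := by positivity
  rw [h6]
  field_simp

theorem stmt_15_general (lam gam : ℝ) (hl6 : lam ^ 2 < 6) :
    (∀ μ : ℝ, (Jac lam gam (lam / Real.sqrt 6) 0
        - μ • (1 : Matrix (Fin 2) (Fin 2) ℝ)).det = 0 ↔
      μ = -(6 - lam ^ 2) / 2 ∨ μ = -(3 * gam - lam ^ 2)) ∧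
    (lam ^ 2 < 3 * gam → -(6 - lam ^ 2) / 2 < 0 ∧ -(3 * gam - lam ^ 2) < 0) ∧
    (3 * gam < lam ^ 2 → -(6 - lam ^ 2) / 2 < 0 ∧ 0 < -(3 * gam - lam ^ 2)) := by
  set J := Jac lam gam (lam / Real.sqrt 6) 0
  have hs := sq_div_sqrt_six lam
  have hc := sqrt_three_halves_mul_mul_div_sqrt_six lam
  have h00 : J 0 0 = -(6 - lam ^ 2) / 2 := by
    simp only [J, Jac_eq, Matrix.of_apply, Matrix.cons_val', Matrix.cons_val_zero,
      Matrix.empty_val', Matrix.cons_val_fin_one]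
    linear_combination 9 * hs - 2 * hc
  have h10 : J 1 0 = 0 := by simp [J, Jac_eq]
  have h11 : J 1 1 = -(3 * gam - lam ^ 2) := by
    simp only [J, Jac_eq, Matrix.of_apply, Matrix.cons_val', Matrix.cons_val_one,
      Matrix.empty_val', Matrix.cons_val_fin_one]
    linear_combination 6 * hs
  refine ⟨fun μ => ?_, fun _ => ⟨by linarith, by linarith⟩, fun _ => ⟨by linarith, by linarith⟩⟩
  rw [Matrix.det_sub_smul_one_eq_zero_iff_of_upperTriangular J h10, h00, h11]

/-- The linearization at `P = (λ/√6, 0)` (for `0 ≤ λ² < 6`) has eigenvalues `-(6-λ²)/2`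
and `-(3γ-λ²)`; `P` is a stable node when `λ² < 3γ` and a saddle when `3γ < λ² < 6`. -/
theorem stmt_15 (lam gam : ℝ) (hl : 0 ≤ lam) (hl6 : lam ^ 2 < 6)
    (hg : 0 < gam) (hg2 : gam < 2) :
    (∀ μ : ℝ, (Jac lam gam (lam / Real.sqrt 6) 0
        - μ • (1 : Matrix (Fin 2) (Fin 2) ℝ)).det = 0 ↔
      μ = -(6 - lam ^ 2) / 2 ∨ μ = -(3 * gam - lam ^ 2)) ∧
    (lam ^ 2 < 3 * gam → -(6 - lam ^ 2) / 2 < 0 ∧ -(3 * gam - lam ^ 2) < 0) ∧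
    (3 * gam < lam ^ 2 → -(6 - lam ^ 2) / 2 < 0 ∧ 0 < -(3 * gam - lam ^ 2)) :=
  stmt_15_general lam gam hl6
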